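/- Let n be an even natural number. Then I_n = (−1)^{n/2}·(n−1)!!, where (n−1)!! is the double factorial with the convention (−1)!! = 1 (i.e. for n = 0 the value is 1). -/

import Mathlib

open MeasureTheory Real

/-- Physicists' Hermite polynomials: `H 0 x = 1`, `H 1 x = 2x`,
`H (n+1) x = 2x * H n x - 2n * H (n-1) x`. -/
noncomputable def hermiteP : ℕ → ℝ → ℝ
  | 0, _ => 1
  | 1, x => 2 * x
  | n + 2, x => 2 * x * hermiteP (n + 1) x - 2 * ((n : ℝ) + 1) * hermiteP n x

/-- `I n = √(2/π) ∫ H_n(x) e^{-2x²} dx`. -/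
noncomputable def I (n : ℕ) : ℝ :=
  Real.sqrt (2 / π) * ∫ x : ℝ, hermiteP n x * Real.exp (-2 * x ^ 2)

open Polynomial

/-! Integration by parts against a Gaussian gives
`∫ x p(x) e^{-bx²} dx = (2b)⁻¹ ∫ p'(x) e^{-bx²} dx` for every polynomial `p`. Together with the
three-term recurrence and `H'_{n+1} = 2(n+1) H_n` this yields `I (n + 2) = -(n + 1) I n`, while
`I 0 = 1` is the Gaussian integral `√(π/2)`. -/

theorem integrable_pow_mul_exp_neg_mul_sq {b : ℝ} (hb : 0 < b) (k : ℕ) :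
    Integrable fun x : ℝ => x ^ k * exp (-b * x ^ 2) := by
  -- `x ^ (k : ℝ) = x ^ k` also for negative `x`, since the exponent is an integer
  simpa [rpow_natCast] using
    integrable_rpow_mul_exp_neg_mul_sq hb (neg_one_lt_zero.trans_le k.cast_nonneg)

theorem integrable_eval_mul_exp_neg_mul_sq {b : ℝ} (hb : 0 < b) (p : ℝ[X]) :
    Integrable fun x : ℝ => p.eval x * exp (-b * x ^ 2) := by
  induction p using Polynomial.induction_on' with
  | add p q hp hq =>
    simp only [eval_add, add_mul]
    exact hp.add hq
  | monomial k c =>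
    simpa [mul_assoc] using (integrable_pow_mul_exp_neg_mul_sq hb k).const_mul c

theorem hasDerivAt_eval_mul_exp_neg_mul_sq (b : ℝ) (p : ℝ[X]) (x : ℝ) :
    HasDerivAt (fun x => p.eval x * exp (-b * x ^ 2))
      ((derivative p - C (2 * b) * (X * p)).eval x * exp (-b * x ^ 2)) x := by
  have hexp : HasDerivAt (fun x => exp (-b * x ^ 2)) (exp (-b * x ^ 2) * (-b * (2 * x))) x := by
    simpa using ((hasDerivAt_pow 2 x).const_mul (-b)).exp
  refine ((p.hasDerivAt x).mul hexp).congr_deriv ?_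
  simp only [eval_sub, eval_mul, eval_C, eval_X]
  ring

section PolyGaussianIntegral

variable {b : ℝ} (hb : 0 < b)

noncomputable def polyGaussianIntegral : ℝ[X] →ₗ[ℝ] ℝ where
  toFun p := ∫ x, p.eval x * exp (-b * x ^ 2)
  map_add' p q := by
    simp only [eval_add, add_mul]
    exact integral_add (integrable_eval_mul_exp_neg_mul_sq hb p)
      (integrable_eval_mul_exp_neg_mul_sq hb q)
  map_smul' c p := by
    simp only [eval_smul, smul_eq_mul, mul_assoc, RingHom.id_apply]
    exact integral_const_mul c _

theorem polyGaussianIntegral_apply (p : ℝ[X]) :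
    polyGaussianIntegral hb p = ∫ x, p.eval x * exp (-b * x ^ 2) := rfl

theorem polyGaussianIntegral_C_mul (c : ℝ) (p : ℝ[X]) :
    polyGaussianIntegral hb (C c * p) = c * polyGaussianIntegral hb p := by
  rw [← smul_eq_C_mul, map_smul, smul_eq_mul]

theorem polyGaussianIntegral_X_mul (p : ℝ[X]) :
    polyGaussianIntegral hb (X * p) = (2 * b)⁻¹ * polyGaussianIntegral hb (derivative p) := by
  have hzero : polyGaussianIntegral hb (derivative p - C (2 * b) * (X * p)) = 0 :=
    integral_eq_zero_of_hasDerivAt_of_integrable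
      (hasDerivAt_eval_mul_exp_neg_mul_sq b p)
      (integrable_eval_mul_exp_neg_mul_sq hb _) (integrable_eval_mul_exp_neg_mul_sq hb p)
  rw [map_sub, polyGaussianIntegral_C_mul, sub_eq_zero] at hzero
  rw [hzero, inv_mul_cancel_left₀ (by positivity)]

end PolyGaussianIntegral

noncomputable def physHermite : ℕ → ℝ[X]
  | 0 => 1
  | 1 => C 2 * X
  | n + 2 => C 2 * X * physHermite (n + 1) - C (2 * ((n : ℝ) + 1)) * physHermite n

theorem eval_physHermite : ∀ (n : ℕ) (x : ℝ), (physHermite n).eval x = hermiteP n x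
  | 0, x => by simp [physHermite, hermiteP]
  | 1, x => by simp [physHermite, hermiteP]
  | n + 2, x => by
    simp [physHermite, hermiteP, eval_physHermite (n + 1) x, eval_physHermite n x]

theorem physHermite_add_two (n : ℕ) :
    physHermite (n + 2) = C 2 * X * physHermite (n + 1) - C (2 * ((n : ℝ) + 1)) * physHermite n :=
  rfl

theorem derivative_physHermite_succ :
    ∀ n : ℕ, derivative (physHermite (n + 1)) = C (2 * ((n : ℝ) + 1)) * physHermite n
  | 0 => by simp [physHermite]
  | 1 => by
    simp only [physHermite, CharP.cast_eq_zero, zero_add, mul_one, derivative_sub, derivative_mul,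
      derivative_C, zero_mul, derivative_X, sub_zero, Nat.cast_one, map_mul, map_add, map_one]
    ring
  | n + 2 => by
    rw [physHermite_add_two (n + 1)]
    simp only [derivative_sub, derivative_mul, derivative_C, derivative_X,
      derivative_physHermite_succ (n + 1), derivative_physHermite_succ n]
    rw [physHermite_add_two n]
    simp only [map_mul, map_add, map_natCast, map_ofNat, map_one, Nat.cast_add]
    ring

theorem I_eq_sqrt_mul_polyGaussianIntegral (n : ℕ) :
    I n = √(2 / π) * polyGaussianIntegral two_pos (physHermite n) := by
  simp only [I, polyGaussianIntegral_apply, eval_physHermite]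

theorem I_zero : I 0 = 1 := by
  rw [I_eq_sqrt_mul_polyGaussianIntegral, polyGaussianIntegral_apply]
  simp only [physHermite, eval_one, one_mul, integral_gaussian]
  rw [← sqrt_mul (by positivity), show 2 / π * (π / 2) = 1 by field_simp, sqrt_one]

theorem I_add_two (n : ℕ) : I (n + 2) = -((n : ℝ) + 1) * I n := by
  simp only [I_eq_sqrt_mul_polyGaussianIntegral, physHermite_add_two, map_sub, mul_assoc,
    polyGaussianIntegral_C_mul, polyGaussianIntegral_X_mul, derivative_physHermite_succ]
  ring

theorem I_even_eq (n : ℕ) (hn : Even n) :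
    I n = (-1 : ℝ) ^ (n / 2) * (Nat.doubleFactorial (n - 1) : ℝ) := by
  obtain ⟨k, rfl⟩ := hn
  rw [← two_mul, Nat.mul_div_cancel_left k two_pos]
  induction k with
  | zero => simp [I_zero]
  | succ k ih =>
    rw [mul_add_one, I_add_two, ih, show 2 * k + 2 - 1 = 2 * k + 1 by omega,
      Nat.doubleFactorial_add_one]
    push_cast
    ring
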